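/- Let A be a commutative ℚ-algebra, let d ≥ 1, and let R be a d × d matrix with entries in A. Consider the matrix Φ(T) = ∑_{k≥0} (1/(4^k·(2k+1)!))·T^{2k}·R^{2k} with entries in the formal power series ring A[[T]] (the formal expansion of sinh(TR/2)/(TR/2)). Then the determinant of Φ(T) in A[[T]] equals exp(∑_{j≥1} (B_{2j}/(2j·(2j)!))·tr(R^{2j})·T^{2j}). (This is the determinant–trace identity behind the computation exp(−∑_{j≥1} (B_{2j}/(4j·(2j)!))·u^j·tr(R^{2j})) = det^{1/2}((uR/2)/sinh(uR/2)) identifying the wheel-weight exponential of a curvature matrix with the Â-class.) -/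

import Mathlib

/-!
Jacobi's formula turns the identity into one between logarithmic derivatives. With
`f(x) = sinh(x/2)/(x/2)` we have `Φ = f(T R)` and `x f'(x) = q(x) f(x)` for
`q(x) = x/(e^x - 1) - 1 + x/2 = ∑_{j ≥ 1} B_{2j} x^{2j}/(2j)!`. Power series in `T R` commute,
so `T Φ' = q(T R) Φ`, whence `T (det Φ)' = tr q(T R) · det Φ`, and `tr q(T R) = T g'` for the
wheel series `g`. Thus `det Φ` and `exp g` solve the same equation `F' = g' F` with `F(0) = 1`.
-/

/-- The exponential of a formal power series `f` over a commutative ℚ-algebra `A`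
(intended for `f` with zero constant term): coefficient `n` of `exp f` is
`∑_{m=0}^{n} (1/m!)·(coefficient n of f^m)`.  For `f` with zero constant term this
agrees with substituting `f` into `∑_m X^m/m!`. -/
noncomputable def expPS (A : Type*) [CommRing A] [Algebra ℚ A] (f : PowerSeries A) :
    PowerSeries A :=
  PowerSeries.mk fun n =>
    ∑ m ∈ Finset.range (n + 1),
      algebraMap ℚ A (1 / (Nat.factorial m : ℚ)) * PowerSeries.coeff (R := A) n (f ^ m)

/-- `Φ(T) = ∑_{k≥0} T^{2k}·R^{2k}/(4^k·(2k+1)!)` as a matrix over `A[[T]]`: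
the `(i,j)` entry has `T^n`-coefficient `(1/(2^n·(n+1)!))·(R^n)_{ij}` for `n` even
(note `4^k = 2^{2k}`), and `0` for `n` odd. -/
noncomputable def sinhMatrix {A : Type*} [CommRing A] [Algebra ℚ A] {d : ℕ}
    (R : Matrix (Fin d) (Fin d) A) : Matrix (Fin d) (Fin d) (PowerSeries A) :=
  Matrix.of fun i j =>
    PowerSeries.mk fun n =>
      if Even n then
        algebraMap ℚ A (1 / ((2 : ℚ) ^ n * (Nat.factorial (n + 1) : ℚ))) * (R ^ n) i j
      else 0

/-- `∑_{j≥1} (B_{2j}/(2j·(2j)!))·tr(R^{2j})·T^{2j}` in `A[[T]]`: the coefficient of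
`T^n` is `(B_n/(n·n!))·tr(R^n)` when `n` is even and nonzero, and `0` otherwise. -/
noncomputable def traceWheelSeries {A : Type*} [CommRing A] [Algebra ℚ A] {d : ℕ}
    (R : Matrix (Fin d) (Fin d) A) : PowerSeries A :=
  PowerSeries.mk fun n =>
    if Even n ∧ n ≠ 0 then
      algebraMap ℚ A (bernoulli n / ((n : ℚ) * (Nat.factorial n : ℚ))) *
        Matrix.trace (R ^ n)
    else 0

open PowerSeries Finset

namespace Derivation

variable {R S M : Type*} [CommRing R] [CommRing S] [Algebra R S] [AddCommGroup M] [Module S M]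
  [Module R M]

theorem leibniz_prod (D : Derivation R S M) {ι : Type*} [DecidableEq ι] (s : Finset ι)
    (f : ι → S) :
    D (∏ i ∈ s, f i) = ∑ i ∈ s, (∏ j ∈ s.erase i, f j) • D (f i) := by
  induction s using Finset.induction_on with
  | empty => simp
  | insert a s ha ih =>
    rw [prod_insert ha, leibniz, ih, sum_insert ha, erase_insert ha, smul_sum, add_comm]
    congr 1
    refine sum_congr rfl fun i hi => ?_
    rw [erase_insert_of_ne (ne_of_mem_of_not_mem hi ha).symm,
      prod_insert fun h => ha (mem_of_mem_erase h), mul_smul]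

variable {n : Type*} [Fintype n] [DecidableEq n]

theorem map_det_eq_sum_det_updateCol (D : Derivation R S S) (A : Matrix n n S) :
    D A.det = ∑ j, (A.updateCol j fun k => D (A k j)).det := by
  simp only [Matrix.det_apply', map_sum, leibniz, leibniz_prod, map_intCast, smul_eq_mul,
    mul_zero, add_zero, mul_sum]
  rw [sum_comm]
  refine sum_congr rfl fun j _ => sum_congr rfl fun σ _ => ?_
  rw [← mul_prod_erase univ _ (mem_univ j), Matrix.updateCol_self,
    prod_congr rfl fun i hi => Matrix.updateCol_ne (ne_of_mem_erase hi)]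
  ring

theorem map_det (D : Derivation R S S) (A : Matrix n n S) :
    D A.det = (A.adjugate * A.map D).trace := by
  rw [map_det_eq_sum_det_updateCol, Matrix.trace]
  refine sum_congr rfl fun j _ => ?_
  rw [← Matrix.cramer_apply, Matrix.cramer_eq_adjugate_mulVec]
  simp [Matrix.mulVec, Matrix.mul_apply, dotProduct]

theorem mul_map_det_of_smul_map_eq_mul (D : Derivation R S S) {A B : Matrix n n S} {c : S}
    (h : c • A.map D = B * A) : c * D A.det = B.trace * A.det := by
  rw [map_det, ← smul_eq_mul, ← Matrix.trace_smul, ← Matrix.mul_smul, h, ← Matrix.mul_assoc,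
    Matrix.trace_mul_cycle, Matrix.mul_adjugate, Matrix.smul_mul, Matrix.one_mul,
    Matrix.trace_smul, smul_eq_mul, mul_comm]

end Derivation

namespace PowerSeries

variable {A : Type*} [CommRing A]

theorem eq_of_derivative_eq_mul_self [IsAddTorsionFree A] {q F G : A⟦X⟧}
    (hF : d⁄dX A F = q * F) (hG : d⁄dX A G = q * G) (h0 : constantCoeff F = constantCoeff G) :
    F = G := by
  ext n
  induction n using Nat.strong_induction_on with
  | _ n ih =>
    cases n with
    | zero => simpa using h0
    | succ m =>
      have hD : coeff m (d⁄dX A F) = coeff m (d⁄dX A G) := by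
        rw [hF, hG, coeff_mul, coeff_mul]
        exact sum_congr rfl fun p hp =>
          by rw [ih p.2 (Nat.lt_succ_of_le (HasAntidiagonal.antidiagonal.snd_le hp))]
      rw [coeff_derivative, coeff_derivative, mul_comm, mul_comm _ ((m : A) + 1)] at hD
      exact nsmul_right_injective m.succ_ne_zero (by simpa [nsmul_eq_mul] using hD)

variable [Algebra ℚ A]

theorem expPS_eq_subst_exp {f : A⟦X⟧} (hf : constantCoeff f = 0) :
    expPS A f = (exp A).subst f := by
  ext n
  rw [coeff_subst' (HasSubst.of_constantCoeff_zero' hf), expPS, coeff_mk,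
    finsum_eq_sum_of_support_subset (s := range (n + 1))]
  · simp [coeff_exp]
  · refine fun m hm => mem_coe.mpr (mem_range.mpr (not_le.mp fun hnm => hm ?_))
    simp only [X_pow_dvd_iff.mp (pow_dvd_pow_of_dvd (X_dvd_iff.mpr hf) m) n (by omega), smul_zero]

theorem derivative_expPS {f : A⟦X⟧} (hf : constantCoeff f = 0) :
    d⁄dX A (expPS A f) = d⁄dX A f * expPS A f := by
  rw [expPS_eq_subst_exp hf, derivative_subst (HasSubst.of_constantCoeff_zero' hf),
    derivative_exp, mul_comm]

theorem constantCoeff_expPS (f : A⟦X⟧) : constantCoeff (expPS A f) = 1 := by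
  rw [← coeff_zero_eq_constantCoeff_apply]
  simp [expPS]

end PowerSeries

namespace Matrix

variable {S A n : Type*} [CommRing S] [CommRing A] [Algebra S A] [Fintype n] [DecidableEq n]
  (R : Matrix n n A)

/-- `p(T • R)` for a power series `p` over `S` in the variable `T`. -/
noncomputable def powerSeriesEval (p : S⟦X⟧) : Matrix n n A⟦X⟧ :=
  of fun i j => mk fun k => algebraMap S A (coeff k p) * (R ^ k) i j

theorem powerSeriesEval_mul (p q : S⟦X⟧) :
    R.powerSeriesEval (p * q) = R.powerSeriesEval p * R.powerSeriesEval q := by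
  ext i j k
  simp only [powerSeriesEval, mul_apply, of_apply, coeff_mk, coeff_mul, map_sum, sum_mul]
  rw [sum_comm]
  refine sum_congr rfl fun ab hab => ?_
  rw [map_mul, ← mem_antidiagonal.mp hab, pow_add, mul_apply, mul_sum]
  exact sum_congr rfl fun l _ => by ring

theorem trace_powerSeriesEval (p : S⟦X⟧) :
    (R.powerSeriesEval p).trace = mk fun k => algebraMap S A (coeff k p) * (R ^ k).trace := by
  ext k
  simp [powerSeriesEval, trace, mul_sum]

theorem X_smul_map_derivative_powerSeriesEval (p : S⟦X⟧) :
    (X : A⟦X⟧) • (R.powerSeriesEval p).map (d⁄dX A) =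
      R.powerSeriesEval (X * d⁄dX S p) := by
  ext i j k
  cases k with
  | zero => simp [powerSeriesEval]
  | succ k =>
    simp only [smul_apply, map_apply, powerSeriesEval, of_apply, smul_eq_mul, coeff_succ_X_mul,
      coeff_derivative, coeff_mk, map_mul, map_add, map_natCast, map_one]
    ring

end Matrix

namespace PowerSeries

theorem derivative_rescale {A : Type*} [CommSemiring A] (a : A) (f : A⟦X⟧) :
    d⁄dX A (rescale a f) = C a * rescale a (d⁄dX A f) := by
  ext n
  simp only [coeff_derivative, coeff_rescale, coeff_C_mul]
  ring

/-- The expansion of `sinh(X/2)/(X/2)`. -/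
noncomputable def sinhcHalf : ℚ⟦X⟧ :=
  mk fun n => if Even n then 1 / (2 ^ n * (n + 1).factorial : ℚ) else 0

theorem X_mul_sinhcHalf :
    X * sinhcHalf = rescale (1 / 2 : ℚ) (exp ℚ) - rescale (-(1 / 2) : ℚ) (exp ℚ) := by
  ext n
  cases n with
  | zero => simp only [map_sub, coeff_zero_X_mul, coeff_rescale, coeff_exp]; simp
  | succ m =>
    rcases Nat.even_or_odd m with hm | hm
    · simp [sinhcHalf, coeff_exp, hm, hm.add_one.neg_pow, Nat.factorial_succ]
      field_simp
      ring
    · simp [sinhcHalf, coeff_exp, Nat.not_even_iff_odd.mpr hm, hm.add_one.neg_pow]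

noncomputable def bernoulliEvenTail : ℚ⟦X⟧ :=
  mk fun k => if Even k ∧ k ≠ 0 then bernoulli k / k.factorial else 0

theorem bernoulliPowerSeries_eq_bernoulliEvenTail :
    bernoulliPowerSeries ℚ = 1 - C (1 / 2 : ℚ) * X + bernoulliEvenTail := by
  ext k
  rcases Nat.even_or_odd k with hk | hk
  · rcases eq_or_ne k 0 with rfl | hk0
    · simp [bernoulliPowerSeries, bernoulliEvenTail]
    · have hk1 : k ≠ 1 := by rintro rfl; exact Nat.not_even_one hk
      simp [bernoulliPowerSeries, bernoulliEvenTail, hk, hk0, hk1, coeff_X, coeff_one]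
  · rcases eq_or_ne k 1 with rfl | hk1
    · simp [bernoulliPowerSeries, bernoulliEvenTail]
      norm_num
    · have hk0 : k ≠ 0 := by rintro rfl; exact Nat.not_odd_zero hk
      simp [bernoulliPowerSeries, bernoulliEvenTail, Nat.not_even_iff_odd.mpr hk, hk0, hk1, coeff_X,
        coeff_one, bernoulli_eq_bernoulli'_of_ne_one hk1, bernoulli'_eq_zero_of_odd hk (by omega)]

theorem X_mul_derivative_sinhcHalf : X * d⁄dX ℚ sinhcHalf = bernoulliEvenTail * sinhcHalf := by
  set s := rescale (1 / 2 : ℚ) (exp ℚ)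
  set t := rescale (-(1 / 2) : ℚ) (exp ℚ)
  have hst : s * t = 1 := by simp [s, t, exp_mul_exp_eq_exp_add]
  have hss : s * s = exp ℚ := by rw [exp_mul_exp_eq_exp_add]; norm_num
  have hD : sinhcHalf + X * d⁄dX ℚ sinhcHalf = C (1 / 2 : ℚ) * (s + t) := by
    have := congrArg (d⁄dX ℚ) X_mul_sinhcHalf
    simp only [Derivation.leibniz, derivative_X, map_sub, derivative_rescale, derivative_exp,
      smul_eq_mul, map_neg] at this
    linear_combination this
  have hB := bernoulliPowerSeries_eq_bernoulliEvenTail ▸ bernoulliPowerSeries_mul_exp_sub_one ℚ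
  have hC : C (1 / 2 : ℚ) * 2 = 1 := by
    rw [← map_ofNat C 2, ← map_mul]
    norm_num
  have hne : (X * (exp ℚ - 1) : ℚ⟦X⟧) ≠ 0 := mul_ne_zero X_ne_zero fun h => by
    simpa [coeff_exp] using congrArg (coeff 1) h
  -- clear the denominators of `X * sinhcHalf` and of `bernoulliPowerSeries ℚ = X / (e^X - 1)`
  refine mul_left_cancel₀ hne ?_
  linear_combination X * (exp ℚ - 1) * hD - X * sinhcHalf * hB
    - (X + C (1 / 2 : ℚ) * X * (exp ℚ - 1)) * X_mul_sinhcHalf + X * (exp ℚ - 1) * t * hC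
    - X * t * hss + X * s * hst

end PowerSeries

section

variable {A : Type*} [CommRing A] [Algebra ℚ A] {d : ℕ} (R : Matrix (Fin d) (Fin d) A)

theorem sinhMatrix_eq_powerSeriesEval : sinhMatrix R = R.powerSeriesEval sinhcHalf := by
  ext i j n
  by_cases hn : Even n <;> simp [sinhMatrix, Matrix.powerSeriesEval, sinhcHalf, hn]

theorem constantCoeff_det_sinhMatrix : constantCoeff (sinhMatrix R).det = 1 := by
  have : (constantCoeff (R := A)).mapMatrix (sinhMatrix R) = 1 := by
    ext i j
    simp [sinhMatrix, ← coeff_zero_eq_constantCoeff_apply, Matrix.one_apply]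
  rw [RingHom.map_det, this, Matrix.det_one]

theorem constantCoeff_traceWheelSeries : constantCoeff (traceWheelSeries R) = 0 := by
  simp [traceWheelSeries, ← coeff_zero_eq_constantCoeff_apply]

theorem trace_powerSeriesEval_bernoulliEvenTail :
    (R.powerSeriesEval bernoulliEvenTail).trace = X * d⁄dX A (traceWheelSeries R) := by
  rw [Matrix.trace_powerSeriesEval]
  ext n
  cases n with
  | zero => simp [bernoulliEvenTail]
  | succ m =>
    simp only [coeff_mk, coeff_succ_X_mul, coeff_derivative, traceWheelSeries, bernoulliEvenTail]
    split_ifs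
    · rw [mul_right_comm, ← map_natCast (algebraMap ℚ A), ← map_one (algebraMap ℚ A),
        ← map_add, ← map_mul]
      congr 2
      push_cast
      field_simp
    · simp

end

theorem det_sinhMatrix_eq_exp_traceWheelSeries_general
    (A : Type*) [CommRing A] [Algebra ℚ A] (d : ℕ)
    (R : Matrix (Fin d) (Fin d) A) :
    Matrix.det (sinhMatrix R) = expPS A (traceWheelSeries R) := by
  have : IsAddTorsionFree A := .of_module_rat A
  refine eq_of_derivative_eq_mul_self ?_ (derivative_expPS (constantCoeff_traceWheelSeries R)) ?_
  · have hΦ : (X : A⟦X⟧) • (sinhMatrix R).map (d⁄dX A) =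
        R.powerSeriesEval bernoulliEvenTail * sinhMatrix R := by
      rw [sinhMatrix_eq_powerSeriesEval, Matrix.X_smul_map_derivative_powerSeriesEval,
        X_mul_derivative_sinhcHalf, Matrix.powerSeriesEval_mul]
    apply X_mul_cancel
    rw [(d⁄dX A).mul_map_det_of_smul_map_eq_mul hΦ, trace_powerSeriesEval_bernoulliEvenTail,
      mul_assoc]
  · rw [constantCoeff_det_sinhMatrix, constantCoeff_expPS]

theorem det_sinhMatrix_eq_exp_traceWheelSeries
    (A : Type*) [CommRing A] [Algebra ℚ A] (d : ℕ) (hd : 1 ≤ d)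
    (R : Matrix (Fin d) (Fin d) A) :
    Matrix.det (sinhMatrix R) = expPS A (traceWheelSeries R) :=
  det_sinhMatrix_eq_exp_traceWheelSeries_general A d R
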